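/- Tree Preservation: in the tree-recognition system, if G is an input graph and G ⇒*_𝓡 H, then G is a tree if and only if H is a tree. -/

import Mathlib

/-! # Rooted graph transformation with relabelling -/

/-- A graph over a label alphabet `(LV, LE)`: finite vertex and edge sets, total
source/target functions, a partial node-labelling function `l`, a total
edge-labelling function `m`, and a partial rootedness function `p`
(`some true` = root node, `some false` = non-root, `none` = undefined). -/
structure RGraph (LV LE : Type) : Type 1 where
  V : Type
  E : Type
  finV : Finite V
  finE : Finite E
  s : E → V
  t : E → V
  l : V → Option LV
  m : E → LE
  p : V → Option Bool

namespace RGraph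

variable {LV LE : Type}

def IsTotallyLabelled (G : RGraph LV LE) : Prop := ∀ v, (G.l v).isSome
def IsTotallyRooted (G : RGraph LV LE) : Prop := ∀ v, (G.p v).isSome
/-- totally labelled, totally rooted graph -/
def IsTLRG (G : RGraph LV LE) : Prop := G.IsTotallyLabelled ∧ G.IsTotallyRooted

/-- The number of root nodes `|p⁻¹({1})|`. -/
noncomputable def rootCount (G : RGraph LV LE) : ℕ := Nat.card {v : G.V // G.p v = some true}

/-- The degree of a node. -/
noncomputable def degree (G : RGraph LV LE) (v : G.V) : ℕ :=
  Nat.card {e : G.E // G.s e = v} + Nat.card {e : G.E // G.t e = v}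

end RGraph

/-- RGraph morphisms preserve sources, targets, edge labels, and node labels and
rootedness wherever these are defined. -/
structure Morphism {LV LE : Type} (G H : RGraph LV LE) : Type where
  fV : G.V → H.V
  fE : G.E → H.E
  src : ∀ e, fV (G.s e) = H.s (fE e)
  tgt : ∀ e, fV (G.t e) = H.t (fE e)
  edgeLabel : ∀ e, G.m e = H.m (fE e)
  nodeLabel : ∀ v x, G.l v = some x → H.l (fV v) = some x
  rootedness : ∀ v b, G.p v = some b → H.p (fV v) = some b

namespace Morphism

variable {LV LE : Type} {G H K : RGraph LV LE}

def Injective (g : Morphism G H) : Prop := Function.Injective g.fV ∧ Function.Injective g.fE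

/-- identity morphism -/
def ident (G : RGraph LV LE) : Morphism G G where
  fV := id
  fE := id
  src := fun _ => rfl
  tgt := fun _ => rfl
  edgeLabel := fun _ => rfl
  nodeLabel := fun _ _ h => h
  rootedness := fun _ _ h => h

/-- composition of morphisms -/
def comp (g : Morphism G H) (h : Morphism H K) : Morphism G K where
  fV := h.fV ∘ g.fV
  fE := h.fE ∘ g.fE
  src := fun e => by simp [Function.comp, g.src e, h.src (g.fE e)]
  tgt := fun e => by simp [Function.comp, g.tgt e, h.tgt (g.fE e)]
  edgeLabel := fun e => by simp [Function.comp, ← h.edgeLabel (g.fE e), g.edgeLabel e]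
  nodeLabel := fun v x hx => h.nodeLabel _ _ (g.nodeLabel v x hx)
  rootedness := fun v b hb => h.rootedness _ _ (g.rootedness v b hb)

end Morphism

/-- An isomorphism of graphs: a morphism with a two-sided inverse morphism. -/
structure Iso {LV LE : Type} (G H : RGraph LV LE) : Type where
  toMor : Morphism G H
  invMor : Morphism H G
  leftV : ∀ v, invMor.fV (toMor.fV v) = v
  leftE : ∀ e, invMor.fE (toMor.fE e) = e
  rightV : ∀ v, toMor.fV (invMor.fV v) = v
  rightE : ∀ e, toMor.fE (invMor.fE e) = e

/-- A rule `⟨L ← K → R⟩`: graphs `L`, `K`, `R` together with inclusion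
(injective) morphisms `K ↪ L` and `K ↪ R`.  (In the rooted relabelling setting
`L` and `R` are additionally required to be TLRGs; this requirement is stated
as a hypothesis where needed.) -/
structure Rule (LV LE : Type) : Type 1 where
  L : RGraph LV LE
  K : RGraph LV LE
  R : RGraph LV LE
  incL : Morphism K L
  incR : Morphism K R
  injL : incL.Injective
  injR : incR.Injective

namespace Rule

variable {LV LE : Type} (r : Rule LV LE) (G : RGraph LV LE)

/-- The inverse rule `r⁻¹ = ⟨R ← K → L⟩`. -/
def inv (r : Rule LV LE) : Rule LV LE where
  L := r.R
  K := r.K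
  R := r.L
  incL := r.incR
  incR := r.incL
  injL := r.injR
  injR := r.injL

/-- The dangling condition: no edge of `G ∖ g(L)` is incident to a node of `g(L ∖ K)`. -/
def Dangling (g : Morphism r.L G) : Prop :=
  ∀ e : G.E, (∀ e' : r.L.E, g.fE e' ≠ e) →
    ∀ v : r.L.V, (∀ k : r.K.V, r.incL.fV k ≠ v) →
      G.s e ≠ g.fV v ∧ G.t e ≠ g.fV v

/-- The match `g` is applicable: it is injective and satisfies the dangling condition. -/
def Applicable (g : Morphism r.L G) : Prop := g.Injective ∧ r.Dangling G g

/-- the nodes `g(L ∖ K)` deleted by applying `r` via `g` -/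
def DelV (g : Morphism r.L G) : Set G.V :=
  {x | ∃ v : r.L.V, (∀ k : r.K.V, r.incL.fV k ≠ v) ∧ g.fV v = x}

/-- the edges `g(L ∖ K)` deleted by applying `r` via `g` -/
def DelE (g : Morphism r.L G) : Set G.E :=
  {x | ∃ e : r.L.E, (∀ k : r.K.E, r.incL.fE k ≠ e) ∧ g.fE e = x}

theorem kept_incL {g : Morphism r.L G} (hinj : g.Injective) (k : r.K.V) :
    g.fV (r.incL.fV k) ∉ r.DelV G g := by
  rintro ⟨v, hv, heq⟩
  exact hv k (hinj.1 heq).symm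

theorem kept_src {g : Morphism r.L G} (h : r.Applicable G g) {e : G.E}
    (he : e ∉ r.DelE G g) : G.s e ∉ r.DelV G g := by
  rintro ⟨v, hv, heq⟩
  by_cases hc : ∃ e', g.fE e' = e
  · obtain ⟨e', rfl⟩ := hc
    by_cases hk : ∃ k, r.incL.fE k = e'
    · obtain ⟨k, rfl⟩ := hk
      have h1 : g.fV (r.L.s (r.incL.fE k)) = G.s (g.fE (r.incL.fE k)) := g.src _
      have h2 : r.incL.fV (r.K.s k) = r.L.s (r.incL.fE k) := r.incL.src k
      have h3 : g.fV v = g.fV (r.incL.fV (r.K.s k)) := by rw [heq, h2, h1]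
      exact hv _ (h.1.1 h3).symm
    · exact he ⟨e', fun k hk' => hk ⟨k, hk'⟩, rfl⟩
  · exact (h.2 e (fun e' he' => hc ⟨e', he'⟩) v hv).1 heq.symm

theorem kept_tgt {g : Morphism r.L G} (h : r.Applicable G g) {e : G.E}
    (he : e ∉ r.DelE G g) : G.t e ∉ r.DelV G g := by
  rintro ⟨v, hv, heq⟩
  by_cases hc : ∃ e', g.fE e' = e
  · obtain ⟨e', rfl⟩ := hc
    by_cases hk : ∃ k, r.incL.fE k = e'
    · obtain ⟨k, rfl⟩ := hk
      have h1 : g.fV (r.L.t (r.incL.fE k)) = G.t (g.fE (r.incL.fE k)) := g.tgt _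
      have h2 : r.incL.fV (r.K.t k) = r.L.t (r.incL.fE k) := r.incL.tgt k
      have h3 : g.fV v = g.fV (r.incL.fV (r.K.t k)) := by rw [heq, h2, h1]
      exact hv _ (h.1.1 h3).symm
    · exact he ⟨e', fun k hk' => hk ⟨k, hk'⟩, rfl⟩
  · exact (h.2 e (fun e' he' => hc ⟨e', he'⟩) v hv).2 heq.symm

attribute [local instance] Classical.propDecidable

/-- The result graph of applying `r` to `G` via an applicable match `g`:
delete `g(L ∖ K)` (undefining labels/rootedness of images of interface nodes
where they are undefined in `K`), then add `R ∖ K` disjointly, relabelling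
(and re-rooting) the images of interface nodes according to `R`. -/
noncomputable def result (g : Morphism r.L G) (h : r.Applicable G g) : RGraph LV LE where
  V := {x : G.V // x ∉ r.DelV G g} ⊕ {v : r.R.V // ∀ k, r.incR.fV k ≠ v}
  E := {x : G.E // x ∉ r.DelE G g} ⊕ {e : r.R.E // ∀ k, r.incR.fE k ≠ e}
  finV := by
    haveI := G.finV; haveI := r.R.finV
    infer_instance
  finE := by
    haveI := G.finE; haveI := r.R.finE
    infer_instance
  s := fun e =>
    match e with
    | Sum.inl x => Sum.inl ⟨G.s x.1, r.kept_src G h x.2⟩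
    | Sum.inr x =>
        if hk : ∃ k, r.incR.fV k = r.R.s x.1 then
          Sum.inl ⟨g.fV (r.incL.fV hk.choose), r.kept_incL G h.1 _⟩
        else Sum.inr ⟨r.R.s x.1, fun k hk' => hk ⟨k, hk'⟩⟩
  t := fun e =>
    match e with
    | Sum.inl x => Sum.inl ⟨G.t x.1, r.kept_tgt G h x.2⟩
    | Sum.inr x =>
        if hk : ∃ k, r.incR.fV k = r.R.t x.1 then
          Sum.inl ⟨g.fV (r.incL.fV hk.choose), r.kept_incL G h.1 _⟩
        else Sum.inr ⟨r.R.t x.1, fun k hk' => hk ⟨k, hk'⟩⟩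
  l := fun v =>
    match v with
    | Sum.inl x =>
        if hk : ∃ k : r.K.V, r.K.l k = none ∧ g.fV (r.incL.fV k) = x.1 then
          r.R.l (r.incR.fV hk.choose)
        else G.l x.1
    | Sum.inr v => r.R.l v.1
  m := fun e =>
    match e with
    | Sum.inl x => G.m x.1
    | Sum.inr x => r.R.m x.1
  p := fun v =>
    match v with
    | Sum.inl x =>
        if hk : ∃ k : r.K.V, r.K.p k = none ∧ g.fV (r.incL.fV k) = x.1 then
          r.R.p (r.incR.fV hk.choose)
        else G.p x.1
    | Sum.inr v => r.R.p v.1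

/-- Direct derivation `G ⇒_r M`: there is an applicable match `g` such that `M`
is isomorphic to the result of applying `r` to `G` via `g`. -/
def Deriv (r : Rule LV LE) (G M : RGraph LV LE) : Prop :=
  ∃ (g : Morphism r.L G) (h : r.Applicable G g), Nonempty (Iso (r.result G g h) M)

end Rule

/-- `G ⇒_𝓡 H` for a set of rules. -/
def GTStep {LV LE : Type} (Rs : Set (Rule LV LE)) (G H : RGraph LV LE) : Prop :=
  ∃ r ∈ Rs, r.Deriv G H

/-- `G ⇒*_𝓡 H`: the reflexive-transitive closure of `⇒_𝓡`, up to isomorphism. -/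
def GTDerivStar {LV LE : Type} (Rs : Set (Rule LV LE)) (G H : RGraph LV LE) : Prop :=
  Relation.ReflTransGen (GTStep Rs) G H ∨ Nonempty (Iso G H)
/-! ## The tree-recognition system -/

/-- node labels: `□` (square) and `△` (triangle) -/
inductive NodeLab : Type where
  | square : NodeLab
  | tri : NodeLab
deriving DecidableEq

/-- `L` of rule `r0`: `v1 --□--> v2`, both `□`-labelled, `v1` unrooted, `v2` rooted. -/
abbrev L0 : RGraph NodeLab Unit where
  V := Fin 2
  E := Unit
  finV := inferInstance
  finE := inferInstance
  s := fun _ => 0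
  t := fun _ => 1
  l := fun _ => some .square
  m := fun _ => ()
  p := ![some false, some true]

/-- `K` of rules `r0` and `r1`: the single node `v1`, unlabelled, rootedness undefined. -/
abbrev K0 : RGraph NodeLab Unit where
  V := Unit
  E := PEmpty
  finV := inferInstance
  finE := inferInstance
  s := PEmpty.elim
  t := PEmpty.elim
  l := fun _ => none
  m := PEmpty.elim
  p := fun _ => none

/-- `R` of rules `r0` and `r1`: the single node `v1`, labelled `□`, rooted. -/
abbrev R0 : RGraph NodeLab Unit where
  V := Unit
  E := PEmpty
  finV := inferInstance
  finE := inferInstance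
  s := PEmpty.elim
  t := PEmpty.elim
  l := fun _ => some .square
  m := PEmpty.elim
  p := fun _ => some true

def incL0 : Morphism K0 L0 where
  fV := fun _ => 0
  fE := PEmpty.elim
  src := fun e => e.elim
  tgt := fun e => e.elim
  edgeLabel := fun e => e.elim
  nodeLabel := fun _ _ h => nomatch h
  rootedness := fun _ _ h => nomatch h

def incR0 : Morphism K0 R0 where
  fV := id
  fE := PEmpty.elim
  src := fun e => e.elim
  tgt := fun e => e.elim
  edgeLabel := fun e => e.elim
  nodeLabel := fun _ _ h => nomatch h
  rootedness := fun _ _ h => nomatch h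

/-- rule `r0`: prune a rooted `□`-leaf with unrooted `□`-parent, root moves to the parent -/
def r0 : Rule NodeLab Unit where
  L := L0
  K := K0
  R := R0
  incL := incL0
  incR := incR0
  injL := ⟨Function.injective_of_subsingleton _, Function.injective_of_subsingleton _⟩
  injR := ⟨Function.injective_of_subsingleton _, Function.injective_of_subsingleton _⟩

/-- `L` of rule `r1`: like `L0` but `v1` is labelled `△`. -/
abbrev L1 : RGraph NodeLab Unit where
  V := Fin 2
  E := Unit
  finV := inferInstance
  finE := inferInstance
  s := fun _ => 0
  t := fun _ => 1
  l := ![some .tri, some .square]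
  m := fun _ => ()
  p := ![some false, some true]

def incL1 : Morphism K0 L1 where
  fV := fun _ => 0
  fE := PEmpty.elim
  src := fun e => e.elim
  tgt := fun e => e.elim
  edgeLabel := fun e => e.elim
  nodeLabel := fun _ _ h => nomatch h
  rootedness := fun _ _ h => nomatch h

/-- rule `r1`: prune a rooted `□`-leaf with unrooted `△`-parent, root moves to the
parent which becomes `□`-labelled -/
def r1 : Rule NodeLab Unit where
  L := L1
  K := K0
  R := R0
  incL := incL1
  incR := incR0
  injL := ⟨Function.injective_of_subsingleton _, Function.injective_of_subsingleton _⟩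
  injR := ⟨Function.injective_of_subsingleton _, Function.injective_of_subsingleton _⟩

/-- `L` of rule `r2`: `v1 --□--> v2`, both `□`-labelled, `v1` rooted, `v2` unrooted. -/
abbrev L2 : RGraph NodeLab Unit where
  V := Fin 2
  E := Unit
  finV := inferInstance
  finE := inferInstance
  s := fun _ => 0
  t := fun _ => 1
  l := fun _ => some .square
  m := fun _ => ()
  p := ![some true, some false]

/-- `K` of rule `r2`: nodes `v1, v2`, unlabelled, rootedness undefined, no edges. -/
abbrev K2 : RGraph NodeLab Unit where
  V := Fin 2
  E := PEmpty
  finV := inferInstance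
  finE := inferInstance
  s := PEmpty.elim
  t := PEmpty.elim
  l := fun _ => none
  m := PEmpty.elim
  p := fun _ => none

/-- `R` of rule `r2`: `v1 --□--> v2`, `v1` labelled `△` and unrooted, `v2` labelled `□`
and rooted. -/
abbrev R2 : RGraph NodeLab Unit where
  V := Fin 2
  E := Unit
  finV := inferInstance
  finE := inferInstance
  s := fun _ => 0
  t := fun _ => 1
  l := ![some .tri, some .square]
  m := fun _ => ()
  p := ![some false, some true]

def incL2 : Morphism K2 L2 where
  fV := id
  fE := PEmpty.elim
  src := fun e => e.elim
  tgt := fun e => e.elim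
  edgeLabel := fun e => e.elim
  nodeLabel := fun _ _ h => nomatch h
  rootedness := fun _ _ h => nomatch h

def incR2 : Morphism K2 R2 where
  fV := id
  fE := PEmpty.elim
  src := fun e => e.elim
  tgt := fun e => e.elim
  edgeLabel := fun e => e.elim
  nodeLabel := fun _ _ h => nomatch h
  rootedness := fun _ _ h => nomatch h

/-- rule `r2`: push the root one step down an edge, marking the old position `△` -/
def r2 : Rule NodeLab Unit where
  L := L2
  K := K2
  R := R2
  incL := incL2
  incR := incR2
  injL := ⟨Function.injective_id, Function.injective_of_subsingleton _⟩
  injR := ⟨Function.injective_id, Function.injective_of_subsingleton _⟩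

/-- the rule set of the tree-recognition system -/
def TreeRules : Set (Rule NodeLab Unit) := {r0, r1, r2}

/-! ## Trees -/

/-- `IsUndirWalk G v l w`: `l` is an undirected walk from `v` to `w` in `G`;
each step is an edge together with a boolean telling in which direction it is
traversed. -/
def IsUndirWalk {LV LE : Type} (G : RGraph LV LE) : G.V → List (G.E × Bool) → G.V → Prop
  | v, [], w => v = w
  | v, (e, true) :: rest, w => G.s e = v ∧ IsUndirWalk G (G.t e) rest w
  | v, (e, false) :: rest, w => G.t e = v ∧ IsUndirWalk G (G.s e) rest w

/-- connectedness via undirected walks -/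
def IsConnectedGraph {LV LE : Type} (G : RGraph LV LE) : Prop :=
  ∀ v w : G.V, ∃ l, IsUndirWalk G v l w

/-- an undirected cycle: a non-empty closed undirected walk without repeated edges -/
def HasUndirCycle {LV LE : Type} (G : RGraph LV LE) : Prop :=
  ∃ (v : G.V) (l : List (G.E × Bool)), l ≠ [] ∧ IsUndirWalk G v l v ∧ (l.map Prod.fst).Nodup

/-- a tree: non-empty, connected, no undirected cycles, and every node has at
most one incoming edge -/
def IsTree {LV LE : Type} (G : RGraph LV LE) : Prop :=
  Nonempty G.V ∧ IsConnectedGraph G ∧ ¬ HasUndirCycle G ∧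
    ∀ v : G.V, Nat.card {e : G.E // G.t e = v} ≤ 1

/-- an input graph: a TLRG with exactly one root node, all nodes labelled `□`
(all edges are `□`-labelled since `Unit` is the edge alphabet) -/
def IsInputGraph (G : RGraph NodeLab Unit) : Prop :=
  G.IsTLRG ∧ (∀ v, G.l v = some .square) ∧ G.rootCount = 1

/-- no rule of `Rs` is applicable to `H` -/
def InNormalForm {LV LE : Type} (Rs : Set (Rule LV LE)) (H : RGraph LV LE) : Prop :=
  ¬ ∃ r ∈ Rs, ∃ g : Morphism r.L H, r.Applicable H g

/-! Rules `r0` and `r1` delete a node `x` together with its only incident edge `e`, which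
points into `x` from another node.  Removing such a pendant node changes neither
connectivity, nor the existence of undirected cycles (a cycle cannot pass through `x`
without traversing `e` twice), nor the in-degrees of the remaining nodes, while `x`
itself has in-degree one.  Rule `r2` only relabels: its result has the same underlying
multigraph as the host graph. -/

open Function Relation

namespace RGraph

variable {LV LE : Type}

def Adj (G : RGraph LV LE) (v w : G.V) : Prop :=
  ∃ e, G.s e = v ∧ G.t e = w ∨ G.t e = v ∧ G.s e = w

instance (G : RGraph LV LE) : Std.Symm G.Adj where
  symm _ _ := fun ⟨e, he⟩ => ⟨e, he.symm.imp And.symm And.symm⟩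

/-- Unlike `Morphism`, ignores labels and rootedness, so that relabelling rules such as `r2`
give one from the result graph to the host graph. -/
structure IncidenceHom (G H : RGraph LV LE) where
  fV : G.V → H.V
  fE : G.E → H.E
  map_s : ∀ e, fV (G.s e) = H.s (fE e)
  map_t : ∀ e, fV (G.t e) = H.t (fE e)

end RGraph

open RGraph

variable {LV LE : Type}

theorem IsUndirWalk.append_iff {G : RGraph LV LE} {l₁ l₂ : List (G.E × Bool)} {v w : G.V} :
    IsUndirWalk G v (l₁ ++ l₂) w ↔
      ∃ u, IsUndirWalk G v l₁ u ∧ IsUndirWalk G u l₂ w := by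
  induction l₁ generalizing v with
  | nil => simp [IsUndirWalk]
  | cons p l₁ ih =>
    obtain ⟨e, _ | _⟩ := p <;> simp [IsUndirWalk, ih, and_assoc, exists_and_left]

theorem IsUndirWalk.reflTransGen {G : RGraph LV LE} :
    ∀ {l : List (G.E × Bool)} {v w : G.V}, IsUndirWalk G v l w → ReflTransGen G.Adj v w
  | [], _, _, h => h ▸ .refl
  | (e, true) :: _, _, _, ⟨hs, h⟩ => .head ⟨e, .inl ⟨hs, rfl⟩⟩ h.reflTransGen
  | (e, false) :: _, _, _, ⟨ht, h⟩ => .head ⟨e, .inr ⟨ht, rfl⟩⟩ h.reflTransGen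

theorem exists_isUndirWalk_of_reflTransGen {G : RGraph LV LE} {v w : G.V}
    (h : ReflTransGen G.Adj v w) : ∃ l, IsUndirWalk G v l w := by
  induction h using Relation.ReflTransGen.head_induction_on with
  | refl => exact ⟨[], rfl⟩
  | head hadj _ ih =>
    obtain ⟨l, hl⟩ := ih
    obtain ⟨e, ⟨hs, rfl⟩ | ⟨ht, rfl⟩⟩ := hadj
    · exact ⟨(e, true) :: l, hs, hl⟩
    · exact ⟨(e, false) :: l, ht, hl⟩

theorem isConnectedGraph_iff_reflTransGen {G : RGraph LV LE} :
    IsConnectedGraph G ↔ ∀ v w, ReflTransGen G.Adj v w :=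
  forall₂_congr fun _ _ =>
    ⟨fun ⟨_, h⟩ => h.reflTransGen, exists_isUndirWalk_of_reflTransGen⟩

theorem IsConnectedGraph.of_surjective {G H : RGraph LV LE} (π : G.V → H.V)
    (hπ : Surjective π) (hadj : ∀ e, ReflTransGen H.Adj (π (G.s e)) (π (G.t e)))
    (hG : IsConnectedGraph G) : IsConnectedGraph H := by
  rw [isConnectedGraph_iff_reflTransGen] at hG ⊢
  intro a b
  obtain ⟨v, rfl⟩ := hπ a
  obtain ⟨w, rfl⟩ := hπ b
  refine (hG v w).lift' π fun v w ⟨e, he⟩ => ?_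
  rcases he with ⟨rfl, rfl⟩ | ⟨rfl, rfl⟩
  · exact hadj e
  · exact symm (hadj e)

namespace RGraph.IncidenceHom

variable {G H : RGraph LV LE} (f : IncidenceHom G H)

theorem adj {v w : G.V} (h : G.Adj v w) : H.Adj (f.fV v) (f.fV w) := by
  obtain ⟨e, ⟨rfl, rfl⟩ | ⟨rfl, rfl⟩⟩ := h
  · exact ⟨f.fE e, .inl ⟨(f.map_s e).symm, (f.map_t e).symm⟩⟩
  · exact ⟨f.fE e, .inr ⟨(f.map_t e).symm, (f.map_s e).symm⟩⟩

theorem isConnectedGraph_of_reachable (hreach : ∀ v, ∃ u, ReflTransGen H.Adj v (f.fV u))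
    (hG : IsConnectedGraph G) : IsConnectedGraph H := by
  rw [isConnectedGraph_iff_reflTransGen] at hG ⊢
  intro v w
  obtain ⟨u, hu⟩ := hreach v
  obtain ⟨u', hu'⟩ := hreach w
  exact hu.trans (((hG u u').lift f.fV fun _ _ => f.adj).trans (symm hu'))

theorem isUndirWalk_map :
    ∀ {l : List (G.E × Bool)} {v w : G.V}, IsUndirWalk G v l w →
      IsUndirWalk H (f.fV v) (l.map (Prod.map f.fE id)) (f.fV w)
  | [], _, _, h => congrArg f.fV h
  | (e, true) :: _, _, _, ⟨hs, h⟩ =>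
    ⟨by rw [← f.map_s, hs], by rw [← f.map_t]; exact isUndirWalk_map h⟩
  | (e, false) :: _, _, _, ⟨ht, h⟩ =>
    ⟨by rw [← f.map_t, ht], by rw [← f.map_s]; exact isUndirWalk_map h⟩

theorem exists_isUndirWalk_lift (hV : Injective f.fV) :
    ∀ {l : List (H.E × Bool)} {u : G.V} {w : H.V}, IsUndirWalk H (f.fV u) l w →
      (∀ p ∈ l, p.1 ∈ Set.range f.fE) →
      ∃ l' w', IsUndirWalk G u l' w' ∧ f.fV w' = w ∧ l'.map (Prod.map f.fE id) = l
  | [], u, _, h, _ => ⟨[], u, rfl, h, rfl⟩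
  | (e, b) :: l, u, w, h, hl => by
    obtain ⟨e, rfl⟩ := hl _ List.mem_cons_self
    have hl' : ∀ p ∈ l, p.1 ∈ Set.range f.fE := fun p hp => hl p (.tail _ hp)
    cases b
    · obtain ⟨ht, h⟩ := h
      rw [← f.map_s] at h
      obtain ⟨l', w', h', hw', rfl⟩ := exists_isUndirWalk_lift hV h hl'
      exact ⟨(e, false) :: l', w', ⟨hV (by rw [f.map_t, ht]), h'⟩, hw', rfl⟩
    · obtain ⟨hs, h⟩ := h
      rw [← f.map_t] at h
      obtain ⟨l', w', h', hw', rfl⟩ := exists_isUndirWalk_lift hV h hl'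
      exact ⟨(e, true) :: l', w', ⟨hV (by rw [f.map_s, hs]), h'⟩, hw', rfl⟩

theorem hasUndirCycle_map (hE : Injective f.fE) (hG : HasUndirCycle G) : HasUndirCycle H := by
  obtain ⟨v, l, hne, hw, hnd⟩ := hG
  refine ⟨f.fV v, l.map (Prod.map f.fE id), by simpa using hne, f.isUndirWalk_map hw, ?_⟩
  simpa [Function.comp_def] using hnd.map hE

theorem hasUndirCycle_of_lift (hV : Injective f.fV) {u : G.V} {l : List (H.E × Bool)}
    (hne : l ≠ []) (hw : IsUndirWalk H (f.fV u) l (f.fV u)) (hnd : (l.map Prod.fst).Nodup)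
    (hl : ∀ p ∈ l, p.1 ∈ Set.range f.fE) : HasUndirCycle G := by
  obtain ⟨l', w', h', hw', rfl⟩ := f.exists_isUndirWalk_lift hV hw hl
  obtain rfl := hV hw'
  refine ⟨w', l', by rintro rfl; exact hne rfl, h', ?_⟩
  simp only [List.map_map] at hnd
  exact List.Nodup.of_map f.fE (by simpa [Function.comp_def] using hnd)

theorem card_inEdges_le (hE : Injective f.fE) (v : G.V) :
    Nat.card {e // G.t e = v} ≤ Nat.card {e // H.t e = f.fV v} := by
  have := H.finE
  exact Nat.card_le_card_of_injective (fun e => ⟨f.fE e, by rw [← f.map_t, e.2]⟩)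
    fun a b hab => Subtype.ext (hE (congrArg Subtype.val hab))

theorem card_inEdges_le_of_range (hV : Injective f.fV) (v : G.V)
    (hrange : ∀ e, H.t e = f.fV v → e ∈ Set.range f.fE) :
    Nat.card {e // H.t e = f.fV v} ≤ Nat.card {e // G.t e = v} := by
  have := G.finE
  refine Nat.card_le_card_of_surjective (fun e => ⟨f.fE e, by rw [← f.map_t, e.2]⟩) ?_
  rintro ⟨e, he⟩
  obtain ⟨e, rfl⟩ := hrange e he
  exact ⟨⟨e, hV (by rw [f.map_t, he])⟩, rfl⟩

theorem isTree_iff (hV : Bijective f.fV) (hE : Bijective f.fE) : IsTree G ↔ IsTree H := by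
  constructor
  · rintro ⟨⟨v⟩, hconn, hacyc, hdeg⟩
    refine ⟨⟨f.fV v⟩, f.isConnectedGraph_of_reachable (fun w => ?_) hconn,
      fun ⟨w, l, hne, hw, hnd⟩ => ?_, fun w => ?_⟩ <;> obtain ⟨u, rfl⟩ := hV.2 w
    · exact ⟨u, .refl⟩
    · exact hacyc (f.hasUndirCycle_of_lift hV.1 hne hw hnd fun p _ => hE.2 p.1)
    · exact (f.card_inEdges_le_of_range hV.1 u fun e _ => hE.2 e).trans (hdeg u)
  · rintro ⟨⟨w⟩, hconn, hacyc, hdeg⟩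
    obtain ⟨v, -⟩ := hV.2 w
    have : Nonempty G.V := ⟨v⟩
    refine ⟨⟨v⟩, hconn.of_surjective (invFun f.fV) (invFun_surjective hV.1) fun e => ?_,
      fun hc => hacyc (f.hasUndirCycle_map hE.1 hc),
      fun u => (f.card_inEdges_le hE.1 u).trans (hdeg _)⟩
    obtain ⟨e, rfl⟩ := hE.2 e
    rw [← f.map_s, ← f.map_t, leftInverse_invFun hV.1, leftInverse_invFun hV.1]
    exact .single ⟨e, .inl ⟨rfl, rfl⟩⟩

end RGraph.IncidenceHom

def Morphism.toIncidenceHom {G H : RGraph LV LE} (g : Morphism G H) : IncidenceHom G H :=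
  ⟨g.fV, g.fE, g.src, g.tgt⟩

theorem isTree_iff_of_iso {G H : RGraph LV LE} (i : Iso G H) : IsTree G ↔ IsTree H :=
  i.toMor.toIncidenceHom.isTree_iff
    ⟨LeftInverse.injective i.leftV, RightInverse.surjective i.rightV⟩
    ⟨LeftInverse.injective i.leftE, RightInverse.surjective i.rightE⟩

section Pendant

variable {G : RGraph LV LE} {x : G.V} {e : G.E}

theorem IsUndirWalk.eq_nil_of_pendant (hinc : ∀ e', G.s e' = x ∨ G.t e' = x → e' = e) :
    ∀ {l : List (G.E × Bool)} {v w : G.V}, IsUndirWalk G v l w → (∀ p ∈ l, p.1 ≠ e) →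
      v = x ∨ w = x → l = []
  | [], _, _, _, _, _ => rfl
  | (e', b) :: l, v, w, h, hl, hx => by
    have he' : e' ≠ e := hl _ List.mem_cons_self
    have hl' : ∀ p ∈ l, p.1 ≠ e := fun p hp => hl p (.tail _ hp)
    have hs : G.s e' ≠ x := fun h => he' (hinc _ (.inl h))
    have ht : G.t e' ≠ x := fun h => he' (hinc _ (.inr h))
    cases b
    · obtain ⟨rfl, h⟩ := h
      have hw := hx.resolve_left ht
      obtain rfl := eq_nil_of_pendant hinc h hl' (.inr hw)
      exact absurd (h.trans hw) hs
    · obtain ⟨rfl, h⟩ := h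
      have hw := hx.resolve_left hs
      obtain rfl := eq_nil_of_pendant hinc h hl' (.inr hw)
      exact absurd (h.trans hw) ht

/-- A cycle through the pendant edge `e` would have to leave `x` again along `e`. -/
theorem notMem_of_isUndirWalk_of_pendant (hinc : ∀ e', G.s e' = x ∨ G.t e' = x → e' = e)
    (hse : G.s e ≠ x) (hte : G.t e = x) {v : G.V} {l : List (G.E × Bool)}
    (hw : IsUndirWalk G v l v) (hnd : (l.map Prod.fst).Nodup) : e ∉ l.map Prod.fst := by
  intro he
  obtain ⟨⟨e', b⟩, hp, he'⟩ := List.mem_map.1 he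
  dsimp only at he'
  subst he'
  obtain ⟨l₁, l₂, rfl⟩ := List.append_of_mem hp
  rw [List.map_append, List.map_cons, List.nodup_append, List.nodup_cons] at hnd
  have h₁ : ∀ p ∈ l₁, p.1 ≠ e' := fun p hp =>
    hnd.2.2 _ (List.mem_map_of_mem hp) _ List.mem_cons_self
  have h₂ : ∀ p ∈ l₂, p.1 ≠ e' := fun p hp hpe =>
    hnd.2.1.1 (List.mem_map.2 ⟨p, hp, hpe⟩)
  obtain ⟨u, hw₁, hw₂⟩ := IsUndirWalk.append_iff.1 hw
  cases b
  · obtain ⟨hu, hw₂⟩ := hw₂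
    obtain rfl := hw₁.eq_nil_of_pendant hinc h₁ (.inr (hu ▸ hte))
    obtain rfl := hw₂.eq_nil_of_pendant hinc h₂ (.inr (hw₁.trans (hu ▸ hte)))
    exact hse (hw₂.trans (hw₁.trans (hu ▸ hte)))
  · obtain ⟨hu, hw₂⟩ := hw₂
    rw [hte] at hw₂
    obtain rfl := hw₂.eq_nil_of_pendant hinc h₂ (.inl rfl)
    obtain rfl := hw₁.eq_nil_of_pendant hinc h₁ (.inl hw₂.symm)
    exact hse (hu.trans (hw₁.symm.trans hw₂.symm))

end Pendant

namespace RGraph.IncidenceHom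

variable {G H : RGraph LV LE}

structure IsLeafDeletion (f : IncidenceHom H G) (x : G.V) (e : G.E) : Prop where
  injective_fV : Injective f.fV
  injective_fE : Injective f.fE
  range_fV : Set.range f.fV = {x}ᶜ
  range_fE : Set.range f.fE = {e}ᶜ
  s_ne : G.s e ≠ x
  t_eq : G.t e = x

namespace IsLeafDeletion

variable {f : IncidenceHom H G} {x : G.V} {e : G.E}

theorem mem_range_fV (hf : f.IsLeafDeletion x e) {v : G.V} (hv : v ≠ x) :
    v ∈ Set.range f.fV := by
  rwa [hf.range_fV]

theorem mem_range_fE (hf : f.IsLeafDeletion x e) {e' : G.E} (he' : e' ≠ e) :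
    e' ∈ Set.range f.fE := by
  rwa [hf.range_fE]

theorem fV_ne (hf : f.IsLeafDeletion x e) (u : H.V) : f.fV u ≠ x := by
  simp [← Set.mem_compl_singleton_iff, ← hf.range_fV]

theorem eq_of_incident (hf : f.IsLeafDeletion x e) (e' : G.E) (h : G.s e' = x ∨ G.t e' = x) :
    e' = e := by
  by_contra he'
  obtain ⟨e', rfl⟩ := hf.mem_range_fE he'
  rw [← f.map_s, ← f.map_t] at h
  exact h.elim (hf.fV_ne _) (hf.fV_ne _)

theorem isTree_host_of_isTree (hf : f.IsLeafDeletion x e) (hH : IsTree H) : IsTree G := by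
  obtain ⟨-, hconn, hacyc, hdeg⟩ := hH
  refine ⟨⟨x⟩, f.isConnectedGraph_of_reachable (fun v => ?_) hconn, ?_, fun v => ?_⟩
  · by_cases hv : v = x
    · obtain ⟨u, hu⟩ := hf.mem_range_fV hf.s_ne
      exact ⟨u, .single ⟨e, .inr ⟨hv ▸ hf.t_eq, hu.symm⟩⟩⟩
    · obtain ⟨u, rfl⟩ := hf.mem_range_fV hv
      exact ⟨u, .refl⟩
  · rintro ⟨v, l, hne, hw, hnd⟩
    have he : ∀ p ∈ l, p.1 ≠ e := fun p hp hpe =>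
      notMem_of_isUndirWalk_of_pendant hf.eq_of_incident hf.s_ne hf.t_eq hw hnd
        (hpe ▸ List.mem_map_of_mem hp)
    obtain ⟨u, rfl⟩ := hf.mem_range_fV fun hv =>
      hne (hw.eq_nil_of_pendant hf.eq_of_incident he (.inl hv))
    exact hacyc (f.hasUndirCycle_of_lift hf.injective_fV hne hw hnd fun p hp =>
      hf.mem_range_fE (he p hp))
  · by_cases hv : v = x
    · have := G.finE
      exact Finite.card_le_one_iff_subsingleton.2
        ⟨fun a b => Subtype.ext ((hf.eq_of_incident _ (.inr (a.2.trans hv))).trans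
          (hf.eq_of_incident _ (.inr (b.2.trans hv))).symm)⟩
    · obtain ⟨u, rfl⟩ := hf.mem_range_fV hv
      refine (f.card_inEdges_le_of_range hf.injective_fV u fun e' he' => ?_).trans (hdeg u)
      exact hf.mem_range_fE fun h => hf.fV_ne u (he'.symm.trans (h ▸ hf.t_eq))

/-- Connectivity of `H` follows by collapsing `x` onto the other end of `e`. -/
theorem isTree_of_isTree_host (hf : f.IsLeafDeletion x e) (hG : IsTree G) : IsTree H := by
  classical
  obtain ⟨-, hconn, hacyc, hdeg⟩ := hG
  obtain ⟨u₀, hu₀⟩ := hf.mem_range_fV hf.s_ne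
  have : Nonempty H.V := ⟨u₀⟩
  set π : G.V → H.V := update (invFun f.fV) x u₀ with hπ_def
  have hπ (u : H.V) : π (f.fV u) = u := by
    rw [hπ_def, update_of_ne (hf.fV_ne u), leftInverse_invFun hf.injective_fV]
  refine ⟨⟨u₀⟩, hconn.of_surjective π (fun u => ⟨_, hπ u⟩) fun e' => ?_,
    fun hc => hacyc (f.hasUndirCycle_map hf.injective_fE hc),
    fun u => (f.card_inEdges_le hf.injective_fE u).trans (hdeg _)⟩
  by_cases he' : e' = e
  · rw [he', hf.t_eq, ← hu₀, hπ, hπ_def, update_self]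
  · obtain ⟨e', rfl⟩ := hf.mem_range_fE he'
    rw [← f.map_s, ← f.map_t, hπ, hπ]
    exact .single ⟨e', .inl ⟨rfl, rfl⟩⟩

theorem isTree_iff (hf : f.IsLeafDeletion x e) : IsTree H ↔ IsTree G :=
  ⟨hf.isTree_host_of_isTree, hf.isTree_of_isTree_host⟩

end IsLeafDeletion

end RGraph.IncidenceHom

namespace Rule

variable {r : Rule LV LE} {G : RGraph LV LE} {g : Morphism r.L G}

theorem result_s_inr (h : r.Applicable G g) (z : {e : r.R.E // ∀ k, r.incR.fE k ≠ e})
    (k : r.K.V) (hk : r.incR.fV k = r.R.s z.1) :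
    (r.result G g h).s (.inr z) = .inl ⟨g.fV (r.incL.fV k), r.kept_incL G h.1 k⟩ := by
  have hex : ∃ k, r.incR.fV k = r.R.s z.1 := ⟨k, hk⟩
  simp only [result, dif_pos hex, Sum.inl.injEq, Subtype.mk.injEq]
  rw [r.injR.1 (hex.choose_spec.trans hk.symm)]

theorem result_t_inr (h : r.Applicable G g) (z : {e : r.R.E // ∀ k, r.incR.fE k ≠ e})
    (k : r.K.V) (hk : r.incR.fV k = r.R.t z.1) :
    (r.result G g h).t (.inr z) = .inl ⟨g.fV (r.incL.fV k), r.kept_incL G h.1 k⟩ := by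
  have hex : ∃ k, r.incR.fV k = r.R.t z.1 := ⟨k, hk⟩
  simp only [result, dif_pos hex, Sum.inl.injEq, Subtype.mk.injEq]
  rw [r.injR.1 (hex.choose_spec.trans hk.symm)]

def resultToHost (h : r.Applicable G g) (hV : Surjective r.incR.fV)
    (hE : Surjective r.incR.fE) : IncidenceHom (r.result G g h) G where
  fV := Sum.elim Subtype.val fun z => absurd (hV z.1) (not_exists.2 z.2)
  fE := Sum.elim Subtype.val fun z => absurd (hE z.1) (not_exists.2 z.2)
  map_s := by
    rintro (e | e)
    · rfl
    · exact absurd (hE e.1) (not_exists.2 e.2)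
  map_t := by
    rintro (e | e)
    · rfl
    · exact absurd (hE e.1) (not_exists.2 e.2)

/-- The hypotheses say that `R ∖ K` is empty and that `L ∖ K` consists of the edge `c` and its
target. -/
theorem isTree_result_iff_of_deletes_leaf (h : r.Applicable G g) (hV : Surjective r.incR.fV)
    (hE : Surjective r.incR.fE) (c : r.L.E) (hc : r.L.s c ≠ r.L.t c)
    (hdelV : ∀ v, (∀ k, r.incL.fV k ≠ v) ↔ v = r.L.t c)
    (hdelE : ∀ e, (∀ k, r.incL.fE k ≠ e) ↔ e = c) :
    IsTree (r.result G g h) ↔ IsTree G := by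
  have hDelV : r.DelV G g = {g.fV (r.L.t c)} := by
    ext
    simp only [DelV, hdelV, exists_eq_left, Set.mem_ofPred_eq, Set.mem_singleton_iff]
    exact eq_comm
  have hDelE : r.DelE G g = {g.fE c} := by
    ext
    simp only [DelE, hdelE, exists_eq_left, Set.mem_ofPred_eq, Set.mem_singleton_iff]
    exact eq_comm
  refine IncidenceHom.IsLeafDeletion.isTree_iff (f := r.resultToHost h hV hE)
    ⟨?_, ?_, ?_, ?_, ?_, (g.tgt c).symm⟩
  · exact Subtype.val_injective.sumElim (fun a => absurd (hV a.1) (not_exists.2 a.2))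
      fun _ b => absurd (hV b.1) (not_exists.2 b.2)
  · exact Subtype.val_injective.sumElim (fun a => absurd (hE a.1) (not_exists.2 a.2))
      fun _ b => absurd (hE b.1) (not_exists.2 b.2)
  · rw [← hDelV]
    ext v
    refine ⟨?_, fun hv => ⟨.inl ⟨v, hv⟩, rfl⟩⟩
    rintro ⟨v | v, rfl⟩
    exacts [v.2, absurd (hV v.1) (not_exists.2 v.2)]
  · rw [← hDelE]
    ext e
    refine ⟨?_, fun he => ⟨.inl ⟨e, he⟩, rfl⟩⟩
    rintro ⟨e | e, rfl⟩
    exacts [e.2, absurd (hE e.1) (not_exists.2 e.2)]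
  · rw [← g.src]
    exact fun h' => hc (h.1.1 h')

end Rule

theorem isTree_result_r0_iff {G : RGraph NodeLab Unit} {g : Morphism r0.L G}
    (h : r0.Applicable G g) : IsTree (r0.result G g h) ↔ IsTree G :=
  r0.isTree_result_iff_of_deletes_leaf h surjective_id (fun e => e.elim) ()
    (by unfold r0; decide) (by unfold r0; decide) (by unfold r0; decide)

theorem isTree_result_r1_iff {G : RGraph NodeLab Unit} {g : Morphism r1.L G}
    (h : r1.Applicable G g) : IsTree (r1.result G g h) ↔ IsTree G :=
  r1.isTree_result_iff_of_deletes_leaf h surjective_id (fun e => e.elim) ()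
    (by unfold r1; decide) (by unfold r1; decide) (by unfold r1; decide)

def r2ResultToHost {G : RGraph NodeLab Unit} {g : Morphism r2.L G} (h : r2.Applicable G g) :
    IncidenceHom (r2.result G g h) G where
  fV := Sum.elim Subtype.val fun z => absurd ⟨z.1, rfl⟩ (not_exists.2 z.2)
  fE := Sum.elim Subtype.val fun _ => g.fE ()
  map_s := by
    rintro (e | e)
    · rfl
    · rw [Rule.result_s_inr h e (0 : Fin 2) rfl]
      exact g.src ()
  map_t := by
    rintro (e | e)
    · rfl
    · rw [Rule.result_t_inr h e (1 : Fin 2) rfl]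
      exact g.tgt ()

theorem isTree_result_r2_iff {G : RGraph NodeLab Unit} {g : Morphism r2.L G}
    (h : r2.Applicable G g) : IsTree (r2.result G g h) ↔ IsTree G := by
  have hdel : g.fE () ∈ r2.DelE G g := ⟨(), fun k => k.elim, rfl⟩
  refine (r2ResultToHost h).isTree_iff ⟨?_, fun v => ⟨.inl ⟨v, ?_⟩, rfl⟩⟩
    ⟨?_, fun e => ?_⟩
  · exact Subtype.val_injective.sumElim (fun a => absurd ⟨a.1, rfl⟩ (not_exists.2 a.2))
      fun _ b => absurd ⟨b.1, rfl⟩ (not_exists.2 b.2)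
  · rintro ⟨w, hw, -⟩
    exact hw w rfl
  · exact Subtype.val_injective.sumElim (fun _ _ _ => Subtype.ext rfl)
      fun a _ hab => a.2 (hab ▸ hdel)
  · by_cases he : e = g.fE ()
    · exact ⟨.inr ⟨(), fun k => k.elim⟩, he.symm⟩
    · exact ⟨.inl ⟨e, fun ⟨(), _, he'⟩ => he he'.symm⟩, rfl⟩

theorem isTree_iff_of_gtStep {G M : RGraph NodeLab Unit} (h : GTStep TreeRules G M) :
    IsTree G ↔ IsTree M := by
  obtain ⟨r, hr, g, hg, ⟨i⟩⟩ := h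
  refine Iff.trans ?_ (isTree_iff_of_iso i)
  obtain rfl | rfl | rfl : r = r0 ∨ r = r1 ∨ r = r2 := hr
  exacts [(isTree_result_r0_iff hg).symm, (isTree_result_r1_iff hg).symm,
    (isTree_result_r2_iff hg).symm]

theorem tree_preservation_general (G H : RGraph NodeLab Unit)
    (hd : GTDerivStar TreeRules G H) :
    IsTree G ↔ IsTree H := by
  rcases hd with hd | ⟨⟨i⟩⟩
  · induction hd with
    | refl => rfl
    | tail _ hstep ih => exact ih.trans (isTree_iff_of_gtStep hstep)
  · exact isTree_iff_of_iso i

/-- **Tree Preservation**: if `G` is an input graph and `G ⇒*_𝓡 H`, then `G` is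
a tree iff `H` is a tree. -/
theorem tree_preservation (G H : RGraph NodeLab Unit)
    (hG : IsInputGraph G) (hd : GTDerivStar TreeRules G H) :
    IsTree G ↔ IsTree H :=
  tree_preservation_general G H hd
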